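/- For natural numbers n, a, b, d with b ≤ n and a+b ≥ d, the sum over k from 0 to n of C(a,k)·C(b,n-k)·C(n-k,d)·H(k) equals C(a+b-d, n-d)·C(b,d)·(H(n-d) - H(a+b-d) + H(a)), where H is the harmonic number. -/

import Mathlib

noncomputable def H (m : ℕ) : ℚ := ∑ j ∈ Finset.range m, (1 : ℚ) / (j + 1)

/-!
Since `C(b, m) C(m, d) = C(b, d) C(b - d, m - d)`, the sum is `C(b, d)` times the same sum with
`b, n, d` replaced by `b - d, n - d, 0`. That sum, `∑ₖ C(a, k) H(k) C(B, N - k)`, satisfies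
Pascal's recurrence in `(B, N)`, and so does `C(A, s) (H(s) - H(A))`, by
`(A + 1) C(A, s) = (s + 1) C(A + 1, s + 1)`; induction on `B` from `B = 0`, where the sum is
the single term `C(a, N) H(N)`, gives `C(a + B, N) (H(N) - H(a + B) + H(a))`.
-/

open Finset

lemma H_succ (m : ℕ) : H (m + 1) = H m + 1 / (m + 1) := by
  simp [H, sum_range_succ]

lemma choose_succ_succ_mul_H_sub_H (A s : ℕ) :
    ((A + 1).choose (s + 1) : ℚ) * (H (s + 1) - H (A + 1)) =
      (A.choose (s + 1) : ℚ) * (H (s + 1) - H A) + A.choose s * (H s - H A) := by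
  have pascal : ((A + 1).choose (s + 1) : ℚ) = A.choose s + A.choose (s + 1) := by
    exact_mod_cast Nat.choose_succ_succ' A s
  have absorption : ((A : ℚ) + 1) * A.choose s = (A + 1).choose (s + 1) * ((s : ℚ) + 1) := by
    exact_mod_cast Nat.add_one_mul_choose_eq A s
  rw [pascal] at absorption ⊢
  rw [H_succ, H_succ]
  field_simp
  linear_combination absorption

lemma sum_mul_choose_mul_choose {R : Type*} [CommSemiring R] (f : ℕ → R) {n b d : ℕ}
    (hdn : d ≤ n) :
    ∑ k ∈ range (n + 1), f k * b.choose (n - k) * (n - k).choose d =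
      b.choose d * ∑ k ∈ range (n - d + 1), f k * (b - d).choose (n - d - k) := by
  have hsplit : n + 1 = (n - d + 1) + d := by omega
  rw [hsplit, sum_range_add, mul_sum]
  have htail : ∀ i ∈ range d,
      f (n - d + 1 + i) * b.choose (n - (n - d + 1 + i)) * (n - (n - d + 1 + i)).choose d = 0 := by
    intro i hi
    have hlt : n - (n - d + 1 + i) < d := by have := mem_range.mp hi; omega
    rw [Nat.choose_eq_zero_of_lt hlt, Nat.cast_zero, mul_zero]
  rw [sum_eq_zero htail, add_zero]
  refine sum_congr rfl fun k hk => ?_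
  have hk : k ≤ n - d := Nat.lt_succ_iff.mp (mem_range.mp hk)
  have hchoose := Nat.choose_mul (n := b) (hsk := show d ≤ n - k by omega)
  rw [show n - k - d = n - d - k by omega] at hchoose
  rw [mul_assoc, ← Nat.cast_mul, hchoose, Nat.cast_mul]
  ring

lemma choose_mul_choose_eq_zero_of_lt {b d : ℕ} (h : b < d) (m : ℕ) :
    b.choose m * m.choose d = 0 := by
  rcases le_or_gt d m with hdm | hmd
  · rw [Nat.choose_mul hdm, Nat.choose_eq_zero_of_lt h, zero_mul]
  · rw [Nat.choose_eq_zero_of_lt hmd, mul_zero]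

lemma sum_mul_choose_succ {R : Type*} [Semiring R] (f : ℕ → R) (B N : ℕ) :
    ∑ k ∈ range (N + 2), f k * (B + 1).choose (N + 1 - k) =
      ∑ k ∈ range (N + 2), f k * B.choose (N + 1 - k) +
        ∑ k ∈ range (N + 1), f k * B.choose (N - k) := by
  rw [sum_range_succ, sum_range_succ _ (N + 1), add_right_comm, ← sum_add_distrib]
  congr 1
  · refine sum_congr rfl fun k hk => ?_
    rw [show N + 1 - k = N - k + 1 by have := mem_range.mp hk; omega, Nat.choose_succ_succ',
      Nat.cast_add, mul_add, add_comm]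
  · simp

lemma sum_choose_mul_H_mul_choose (a B N : ℕ) (hBN : B ≤ N) :
    ∑ k ∈ range (N + 1), (a.choose k : ℚ) * H k * B.choose (N - k) =
      (a + B).choose N * (H N - H (a + B) + H a) := by
  induction B generalizing N with
  | zero =>
    rw [sum_eq_single_of_mem N (self_mem_range_succ N)]
    · simp
    · intro k hk hkN
      rw [Nat.choose_eq_zero_of_lt (n := 0) (by have := mem_range.mp hk; omega), Nat.cast_zero,
        mul_zero]
  | succ B ih =>
    obtain ⟨M, rfl⟩ : ∃ M, N = M + 1 := ⟨N - 1, by omega⟩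
    have pascal :
        ((a + B + 1).choose (M + 1) : ℚ) = (a + B).choose M + (a + B).choose (M + 1) := by
      exact_mod_cast Nat.choose_succ_succ' (a + B) M
    rw [sum_mul_choose_succ, ih (M + 1) (by omega), ih M (by omega), ← add_assoc]
    linear_combination -choose_succ_succ_mul_H_sub_H (a + B) M - H a * pascal

theorem stmt_11_general (n a b d : ℕ) (hb : b ≤ n) :
    ∑ k ∈ Finset.range (n + 1),
      (a.choose k : ℚ) * b.choose (n - k) * (n - k).choose d * H k =
    ((a + b - d).choose (n - d) : ℚ) * b.choose d *
      (H (n - d) - H (a + b - d) + H a) := by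
  rcases lt_or_ge b d with hbd | hdb
  · have hterm : ∀ k ∈ range (n + 1),
        (a.choose k : ℚ) * b.choose (n - k) * (n - k).choose d * H k = 0 := by
      intro k _
      rw [mul_assoc (a.choose k : ℚ), ← Nat.cast_mul, choose_mul_choose_eq_zero_of_lt hbd]
      simp
    rw [sum_eq_zero hterm, Nat.choose_eq_zero_of_lt hbd]
    simp
  · have hreorder : ∀ k ∈ range (n + 1),
        (a.choose k : ℚ) * b.choose (n - k) * (n - k).choose d * H k =
          a.choose k * H k * b.choose (n - k) * (n - k).choose d := fun _ _ => by ring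
    rw [sum_congr rfl hreorder, sum_mul_choose_mul_choose _ (hdb.trans hb),
      sum_choose_mul_H_mul_choose a (b - d) (n - d) (by omega),
      show a + (b - d) = a + b - d by omega]
    ring

theorem stmt_11 (n a b d : ℕ) (hb : b ≤ n) (hd : a + b ≥ d) :
    ∑ k ∈ Finset.range (n + 1),
      (a.choose k : ℚ) * b.choose (n - k) * (n - k).choose d * H k =
    ((a + b - d).choose (n - d) : ℚ) * b.choose d *
      (H (n - d) - H (a + b - d) + H a) :=
  stmt_11_general n a b d hb
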